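/- Let G be a δ-hyperbolic group with finite generating set X, and let H and H' be quasiconvex subgroups of G with constants K and K' respectively. Then the intersection H ∩ H' is a quasiconvex subgroup of G (for some constant depending only on δ, K, K', and |X|). -/
import Mathlib


/-- Evaluate a word over `X ∪ X⁻¹` (letters indexed by `Fin k`, with a sign bit)
in the group `G`, where `ρ : Fin k → G` lists the generators. -/
def evalWord {G : Type*} [Group G] {k : ℕ} (ρ : Fin k → G)
    (w : List (Fin k × Bool)) : G :=
  (w.map fun p => if p.2 then ρ p.1 else (ρ p.1)⁻¹).prod

/-- Word length of `g` with respect to the generating set `ρ`. -/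
noncomputable def wl {G : Type*} [Group G] {k : ℕ} (ρ : Fin k → G) (g : G) : ℕ :=
  sInf {n | ∃ w : List (Fin k × Bool), evalWord ρ w = g ∧ w.length = n}

/-- `ρ` is a generating set of `G`. -/
def Generates {G : Type*} [Group G] {k : ℕ} (ρ : Fin k → G) : Prop :=
  Subgroup.closure (Set.range ρ) = ⊤

/-- `w` is the label of a geodesic in the Cayley graph from `a` to `b`. -/
def IsGeodesicWord {G : Type*} [Group G] {k : ℕ} (ρ : Fin k → G)
    (a b : G) (w : List (Fin k × Bool)) : Prop :=
  evalWord ρ w = a⁻¹ * b ∧ w.length = wl ρ (a⁻¹ * b)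

/-- `v` is a vertex on the path starting at `a` labeled by `w`. -/
def VertexOn {G : Type*} [Group G] {k : ℕ} (ρ : Fin k → G)
    (a : G) (w : List (Fin k × Bool)) (v : G) : Prop :=
  ∃ i ≤ w.length, v = a * evalWord ρ (w.take i)

/-- `H` is `K`-quasiconvex: every vertex on a geodesic with endpoints in `H`
is within distance `K` of `H`. -/
def IsQuasiconvex {G : Type*} [Group G] {k : ℕ} (ρ : Fin k → G)
    (H : Subgroup G) (K : ℕ) : Prop :=
  ∀ a ∈ H, ∀ b ∈ H, ∀ w, IsGeodesicWord ρ a b w →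
    ∀ v, VertexOn ρ a w v → ∃ h ∈ H, wl ρ (v⁻¹ * h) ≤ K

/-- `G` is `δ`-hyperbolic: geodesic triangles are `δ`-thin. -/
def IsHyperbolic {G : Type*} [Group G] {k : ℕ} (ρ : Fin k → G) (δ : ℕ) : Prop :=
  ∀ a b c : G, ∀ wab wbc wac,
    IsGeodesicWord ρ a b wab → IsGeodesicWord ρ b c wbc → IsGeodesicWord ρ a c wac →
    ∀ v, VertexOn ρ a wab v →
      ∃ u, (VertexOn ρ b wbc u ∨ VertexOn ρ a wac u) ∧ wl ρ (v⁻¹ * u) ≤ δ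

/-- The conjugate subgroup `g⁻¹ H g`. -/
def conjSub {G : Type*} [Group G] (g : G) (H : Subgroup G) : Subgroup G :=
  Subgroup.map (MulAut.conj g⁻¹).toMonoidHom H

section InterQCHelpers

variable {G : Type*} [Group G] {k : ℕ}

lemma evalWord_append (ρ : Fin k → G) (w₁ w₂ : List (Fin k × Bool)) :
    evalWord ρ (w₁ ++ w₂) = evalWord ρ w₁ * evalWord ρ w₂ := by
  simp [evalWord]

/-- The formal inverse of a word. -/
def invWord {k : ℕ} (w : List (Fin k × Bool)) : List (Fin k × Bool) :=
  (w.map fun p => (p.1, !p.2)).reverse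

lemma evalWord_invWord (ρ : Fin k → G) (w : List (Fin k × Bool)) :
    evalWord ρ (invWord w) = (evalWord ρ w)⁻¹ := by
  induction w with
  | nil => simp [invWord, evalWord]
  | cons p w ih =>
      have h1 : invWord (p :: w) = invWord w ++ [(p.1, !p.2)] := by simp [invWord]
      rw [h1, evalWord_append, ih]
      obtain ⟨x, b⟩ := p
      cases b <;> simp [evalWord]

/-- The subgroup of elements representable by words. -/
def wordRange (ρ : Fin k → G) : Subgroup G where
  carrier := {g | ∃ w, evalWord ρ w = g}
  one_mem' := ⟨[], rfl⟩
  mul_mem' := by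
    rintro x y ⟨w₁, rfl⟩ ⟨w₂, rfl⟩
    exact ⟨w₁ ++ w₂, evalWord_append ρ w₁ w₂⟩
  inv_mem' := by
    rintro x ⟨w, rfl⟩
    exact ⟨invWord w, evalWord_invWord ρ w⟩

lemma exists_word (ρ : Fin k → G) (hgen : Generates ρ) (g : G) :
    ∃ w, evalWord ρ w = g := by
  have h : Subgroup.closure (Set.range ρ) ≤ wordRange ρ := by
    rw [Subgroup.closure_le]
    rintro x ⟨i, rfl⟩
    exact ⟨[(i, true)], by simp [evalWord]⟩
  exact h (hgen.symm ▸ Subgroup.mem_top g)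

lemma wl_le_length (ρ : Fin k → G) (w : List (Fin k × Bool)) :
    wl ρ (evalWord ρ w) ≤ w.length :=
  Nat.sInf_le ⟨w, rfl, rfl⟩

lemma exists_word_of_wl_le (ρ : Fin k → G) (hgen : Generates ρ) {g : G} {m : ℕ}
    (h : wl ρ g ≤ m) : ∃ w, evalWord ρ w = g ∧ w.length ≤ m := by
  obtain ⟨w0, hw0⟩ := exists_word ρ hgen g
  have hne : Set.Nonempty {n | ∃ w : List (Fin k × Bool), evalWord ρ w = g ∧ w.length = n} :=
    ⟨w0.length, w0, hw0, rfl⟩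
  obtain ⟨w, hw1, hw2⟩ := Nat.sInf_mem hne
  refine ⟨w, hw1, ?_⟩
  rw [hw2]
  exact h

lemma ball_finite (ρ : Fin k → G) (hgen : Generates ρ) (m : ℕ) :
    {g : G | wl ρ g ≤ m}.Finite := by
  apply Set.Finite.subset ((List.finite_length_le (Fin k × Bool) m).image (evalWord ρ))
  rintro g hg
  obtain ⟨w, h1, h2⟩ := exists_word_of_wl_le ρ hgen hg
  exact ⟨w, h2, h1⟩

/-- Vertex at position `r` of the path starting at `v` labeled `u`. -/
def vtx (ρ : Fin k → G) (v : G) (u : List (Fin k × Bool)) (r : ℕ) : G :=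
  v * evalWord ρ (u.take r)

lemma vtx_short (ρ : Fin k → G) (v : G) (u : List (Fin k × Bool)) {i j r : ℕ}
    (hiu : i ≤ u.length) (hr : r ≤ i) : vtx ρ v (u.take i ++ u.drop j) r = vtx ρ v u r := by
  have h1 : (u.take i ++ u.drop j).take r = u.take r := by
    rw [List.take_append]
    have h2 : r - (u.take i).length = 0 := by
      rw [List.length_take]; omega
    rw [h2, List.take_take]
    simp [Nat.min_eq_left hr]
  simp [vtx, h1]

lemma vtx_long (ρ : Fin k → G) (v : G) (u : List (Fin k × Bool)) {i j r : ℕ}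
    (hij : i ≤ j) (hiu : i ≤ u.length) (hr : i ≤ r) :
    vtx ρ v (u.take i ++ u.drop j) r
      = (vtx ρ v u i * (vtx ρ v u j)⁻¹) * vtx ρ v u (j + (r - i)) := by
  have htake : (u.take i ++ u.drop j).take r = u.take i ++ (u.drop j).take (r - i) := by
    rw [List.take_append]
    congr 1
    · apply List.take_of_length_le
      rw [List.length_take]; omega
    · congr 1
      rw [List.length_take]
      omega
  have h3 : evalWord ρ (u.take (j + (r - i)))
      = evalWord ρ (u.take j) * evalWord ρ ((u.drop j).take (r - i)) := by
    rw [← evalWord_append, ← List.take_add]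
  simp only [vtx, htake, evalWord_append, h3]
  group

lemma vertex_transfer (ρ : Fin k → G) (H : Subgroup G) (K : ℕ) (v : G)
    (u : List (Fin k × Bool)) (i j : ℕ) (hij : i ≤ j) (hju : j ≤ u.length)
    (hc : vtx ρ v u i * (vtx ρ v u j)⁻¹ ∈ H)
    (hA : ∀ r ≤ u.length, ∃ a ∈ H, wl ρ ((vtx ρ v u r)⁻¹ * a) ≤ K) :
    ∀ r ≤ (u.take i ++ u.drop j).length,
      ∃ a ∈ H, wl ρ ((vtx ρ v (u.take i ++ u.drop j) r)⁻¹ * a) ≤ K := by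
  intro r hr
  have hlen : (u.take i ++ u.drop j).length = min i u.length + (u.length - j) := by
    simp [List.length_append]
  by_cases hri : r ≤ i
  · rw [vtx_short ρ v u (le_trans hij hju) hri]
    exact hA r (by omega)
  · push_neg at hri
    rw [vtx_long ρ v u hij (le_trans hij hju) (le_of_lt hri)]
    have hjr : j + (r - i) ≤ u.length := by
      rw [hlen] at hr; omega
    obtain ⟨a0, ha0, hK0⟩ := hA (j + (r - i)) hjr
    refine ⟨(vtx ρ v u i * (vtx ρ v u j)⁻¹) * a0, H.mul_mem hc ha0, ?_⟩
    have heq : ((vtx ρ v u i * (vtx ρ v u j)⁻¹) * vtx ρ v u (j + (r - i)))⁻¹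
        * ((vtx ρ v u i * (vtx ρ v u j)⁻¹) * a0)
        = (vtx ρ v u (j + (r - i)))⁻¹ * a0 := by group
    rw [heq]
    exact hK0

lemma key_lemma (ρ : Fin k → G) (H H' : Subgroup G) (K K' N : ℕ)
    (S : Finset (G × G)) (hScard : S.card = N)
    (hS : ∀ p q : G, wl ρ p ≤ K → wl ρ q ≤ K' → (p, q) ∈ S)
    (n : ℕ) :
    ∀ (v : G) (u : List (Fin k × Bool)) (g : G),
      u.length ≤ n → v * evalWord ρ u = g → g ∈ H ⊓ H' →
      (∀ r ≤ u.length, ∃ a ∈ H, wl ρ ((vtx ρ v u r)⁻¹ * a) ≤ K) →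
      (∀ r ≤ u.length, ∃ b ∈ H', wl ρ ((vtx ρ v u r)⁻¹ * b) ≤ K') →
      ∃ h ∈ H ⊓ H', wl ρ (v⁻¹ * h) ≤ N := by
  induction n with
  | zero =>
      intro v u g hn hev hg _ _
      refine ⟨g, hg, ?_⟩
      have h1 : v⁻¹ * g = evalWord ρ u := by rw [← hev]; group
      rw [h1]
      exact le_trans (wl_le_length ρ u) (by omega)
  | succ n ih =>
      intro v u g hn hev hg hA hB
      by_cases hshort : u.length ≤ N
      · refine ⟨g, hg, ?_⟩
        have h1 : v⁻¹ * g = evalWord ρ u := by rw [← hev]; group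
        rw [h1]
        exact le_trans (wl_le_length ρ u) hshort
      · push_neg at hshort
        have hre : ∀ r : Fin (N + 1), (r : ℕ) ≤ u.length := fun r => by
          have := r.isLt; omega
        choose A hAH hAK using fun r : Fin (N + 1) => hA r (hre r)
        choose B hBH hBK using fun r : Fin (N + 1) => hB r (hre r)
        have hmaps : ∀ r ∈ (Finset.univ : Finset (Fin (N + 1))),
            ((vtx ρ v u r)⁻¹ * A r, (vtx ρ v u r)⁻¹ * B r) ∈ S := by
          intro r _
          exact hS _ _ (hAK r) (hBK r)
        obtain ⟨i0, -, j0, -, hne0, hfe0⟩ :=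
          Finset.exists_ne_map_eq_of_card_lt_of_maps_to
            (by rw [hScard, Finset.card_univ, Fintype.card_fin]; omega) hmaps
        have main : ∀ i j : Fin (N + 1), (i : ℕ) < (j : ℕ) →
            (vtx ρ v u i)⁻¹ * A i = (vtx ρ v u j)⁻¹ * A j →
            (vtx ρ v u i)⁻¹ * B i = (vtx ρ v u j)⁻¹ * B j →
            ∃ h ∈ H ⊓ H', wl ρ (v⁻¹ * h) ≤ N := by
          intro i j hij hA2 hB2
          have hju : (j : ℕ) ≤ u.length := hre j
          have hcA : vtx ρ v u i * (vtx ρ v u j)⁻¹ = A i * (A j)⁻¹ := by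
            have h4 : A i = vtx ρ v u i * ((vtx ρ v u j)⁻¹ * A j) := by
              rw [← hA2]; group
            rw [h4]; group
          have hcB : vtx ρ v u i * (vtx ρ v u j)⁻¹ = B i * (B j)⁻¹ := by
            have h4 : B i = vtx ρ v u i * ((vtx ρ v u j)⁻¹ * B j) := by
              rw [← hB2]; group
            rw [h4]; group
          have hcH : vtx ρ v u i * (vtx ρ v u j)⁻¹ ∈ H := by
            rw [hcA]; exact H.mul_mem (hAH i) (H.inv_mem (hAH j))
          have hcH' : vtx ρ v u i * (vtx ρ v u j)⁻¹ ∈ H' := by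
            rw [hcB]; exact H'.mul_mem (hBH i) (H'.inv_mem (hBH j))
          have hg' : (vtx ρ v u i * (vtx ρ v u j)⁻¹) * g ∈ H ⊓ H' :=
            (H ⊓ H').mul_mem (Subgroup.mem_inf.mpr ⟨hcH, hcH'⟩) hg
          have hlen' : (u.take (i : ℕ) ++ u.drop (j : ℕ)).length ≤ n := by
            simp only [List.length_append, List.length_take, List.length_drop]
            omega
          have hev' : v * evalWord ρ (u.take (i : ℕ) ++ u.drop (j : ℕ))
              = (vtx ρ v u i * (vtx ρ v u j)⁻¹) * g := by
            have h2 : evalWord ρ (u.take (j : ℕ)) * evalWord ρ (u.drop (j : ℕ))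
                = evalWord ρ u := by
              rw [← evalWord_append, List.take_append_drop]
            rw [evalWord_append, ← hev, ← h2]
            simp only [vtx]
            group
          exact ih v (u.take (i : ℕ) ++ u.drop (j : ℕ)) _ hlen' hev' hg'
            (vertex_transfer ρ H K v u i j (le_of_lt hij) hju hcH hA)
            (vertex_transfer ρ H' K' v u i j (le_of_lt hij) hju hcH' hB)
        have hprod1 := congrArg Prod.fst hfe0
        have hprod2 := congrArg Prod.snd hfe0
        have hvne : (i0 : ℕ) ≠ (j0 : ℕ) := fun h => hne0 (Fin.ext h)
        rcases hvne.lt_or_gt with hlt | hlt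
        · exact main i0 j0 hlt hprod1 hprod2
        · exact main j0 i0 hlt hprod1.symm hprod2.symm

end InterQCHelpers

/-- The intersection of two quasiconvex subgroups of a `δ`-hyperbolic group is
quasiconvex for some constant. -/
theorem inter_quasiconvex
    {G : Type*} [Group G] {k : ℕ} (ρ : Fin k → G) (hgen : Generates ρ)
    (δ : ℕ) (hhyp : IsHyperbolic ρ δ)
    (H H' : Subgroup G) (K K' : ℕ)
    (hqc : IsQuasiconvex ρ H K) (hqc' : IsQuasiconvex ρ H' K') :
    ∃ L : ℕ, IsQuasiconvex ρ (H ⊓ H') L := by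
  classical
  have hfin : ({p : G | wl ρ p ≤ K} ×ˢ {q : G | wl ρ q ≤ K'}).Finite :=
    (ball_finite ρ hgen K).prod (ball_finite ρ hgen K')
  refine ⟨hfin.toFinset.card, ?_⟩
  intro a ha b hb w hw v hv
  obtain ⟨s, hs, rfl⟩ := hv
  have hS : ∀ p q : G, wl ρ p ≤ K → wl ρ q ≤ K' → (p, q) ∈ hfin.toFinset := by
    intro p q hp hq
    rw [Set.Finite.mem_toFinset]
    exact Set.mem_prod.mpr ⟨hp, hq⟩
  have hwev : evalWord ρ w = a⁻¹ * b := hw.1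
  have hev : (a * evalWord ρ (w.take s)) * evalWord ρ (w.drop s) = b := by
    rw [mul_assoc, ← evalWord_append, List.take_append_drop, hwev]
    group
  have hAv : ∀ r ≤ (w.drop s).length,
      ∃ x ∈ H, wl ρ ((vtx ρ (a * evalWord ρ (w.take s)) (w.drop s) r)⁻¹ * x) ≤ K := by
    intro r hr
    have hvtx : vtx ρ (a * evalWord ρ (w.take s)) (w.drop s) r
        = a * evalWord ρ (w.take (s + r)) := by
      simp only [vtx]
      rw [List.take_add, evalWord_append, mul_assoc]
    rw [hvtx]
    exact hqc a (Subgroup.mem_inf.mp ha).1 b (Subgroup.mem_inf.mp hb).1 w hw _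
      ⟨s + r, by simp only [List.length_drop] at hr; omega, rfl⟩
  have hBv : ∀ r ≤ (w.drop s).length,
      ∃ x ∈ H', wl ρ ((vtx ρ (a * evalWord ρ (w.take s)) (w.drop s) r)⁻¹ * x) ≤ K' := by
    intro r hr
    have hvtx : vtx ρ (a * evalWord ρ (w.take s)) (w.drop s) r
        = a * evalWord ρ (w.take (s + r)) := by
      simp only [vtx]
      rw [List.take_add, evalWord_append, mul_assoc]
    rw [hvtx]
    exact hqc' a (Subgroup.mem_inf.mp ha).2 b (Subgroup.mem_inf.mp hb).2 w hw _
      ⟨s + r, by simp only [List.length_drop] at hr; omega, rfl⟩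
  exact key_lemma ρ H H' K K' hfin.toFinset.card hfin.toFinset rfl hS
    (w.drop s).length (a * evalWord ρ (w.take s)) (w.drop s) b le_rfl hev hb hAv hBv
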